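/- Let Λ : ℝ → ℝ be defined by Λ(x) = 8(e^{−x²/2} − 1). Then Λ is infinitely differentiable and for every k ≥ 1, sup_{x∈ℝ} |Λ^{(k)}(x)| ≤ (8/√e)·(3(k+1)/2)^{3(k+1)/2}. -/

import Mathlib

/-- The component function `Λ` of the hard-instance construction. -/
noncomputable def Lam (x : ℝ) : ℝ := 8 * (Real.exp (-x ^ 2 / 2) - 1)

/-! For `k ≥ 1`, `Λ⁽ᵏ⁾(x) = 8 (-1)ᵏ Heₖ(x) e^{-x²/2}` with `Heₖ` the probabilists' Hermite
polynomial. The recurrence for its coefficients bounds them by `k!`, so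
`|Heₖ(x)| ≤ k! (1 + |x|)ᵏ`. Since `(1 + |x|)² ≤ 2 (1 + x²)` and `yᵏ e^{-y} ≤ kᵏ e^{-k}`
(from `y / k ≤ e^{y/k - 1}`), `(1 + |x|)^{2k} e^{-x²} ≤ e kᵏ`. After squaring, the claim reduces
to `e² (k!)² kᵏ ≤ a^{2a} = a^{3k+3}` for `a = 3(k+1)/2 ≥ 3`, which follows from
`k! ≤ kᵏ ≤ aᵏ` and `e² ≤ a³`. -/

open Polynomial Real Nat

namespace Polynomial

theorem abs_coeff_hermite_le_factorial (n k : ℕ) : |(hermite n).coeff k| ≤ n ! := by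
  induction n generalizing k with
  | zero => rcases k with _ | k <;> simp [coeff_one]
  | succ n ih =>
    have hmono : (n ! : ℤ) ≤ (n + 1)! := by exact_mod_cast factorial_le n.le_succ
    rcases k with _ | k
    · rw [coeff_hermite_succ_zero, abs_neg]
      exact (ih 1).trans hmono
    have htail : ((k : ℤ) + 2) * |(hermite n).coeff (k + 2)| ≤ n * n ! := by
      rcases lt_or_ge n (k + 2) with h | h
      · rw [coeff_hermite_of_lt h, abs_zero, mul_zero]; positivity
      · gcongr
        · exact_mod_cast h
        · exact ih _
    calc |(hermite (n + 1)).coeff (k + 1)|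
        ≤ |(hermite n).coeff k| + ((k : ℤ) + 2) * |(hermite n).coeff (k + 2)| := by
          rw [coeff_hermite_succ_succ]
          refine (abs_sub _ _).trans_eq ?_
          rw [abs_mul, abs_of_nonneg (by positivity : (0 : ℤ) ≤ k + 2)]
      _ ≤ n ! + n * n ! := add_le_add (ih k) htail
      _ = (n + 1)! := by push_cast [factorial_succ]; ring

theorem abs_eval_le_mul_one_add_abs_pow {p : ℝ[X]} {n : ℕ} {C : ℝ} (hp : p.natDegree ≤ n)
    (hC : ∀ i, |p.coeff i| ≤ C) (x : ℝ) : |p.eval x| ≤ C * (1 + |x|) ^ n := by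
  have hC0 : 0 ≤ C := (abs_nonneg _).trans (hC 0)
  rw [eval_eq_sum_range' (Nat.lt_succ_of_le hp), add_comm, add_pow, Finset.mul_sum]
  refine (Finset.abs_sum_le_sum_abs _ _).trans (Finset.sum_le_sum fun i hi => ?_)
  rw [abs_mul, abs_pow, one_pow, mul_one]
  have hchoose : (1 : ℝ) ≤ n.choose i := by
    exact_mod_cast Nat.choose_pos (Nat.lt_succ_iff.mp (Finset.mem_range.mp hi))
  calc |p.coeff i| * |x| ^ i ≤ C * |x| ^ i := by gcongr; exact hC i
    _ ≤ C * (|x| ^ i * n.choose i) := by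
      gcongr; exact le_mul_of_one_le_right (by positivity) hchoose

theorem abs_aeval_hermite_le (n : ℕ) (x : ℝ) :
    |aeval x (hermite n)| ≤ n ! * (1 + |x|) ^ n := by
  rw [aeval_def, ← eval_map]
  refine abs_eval_le_mul_one_add_abs_pow (natDegree_map_le.trans natDegree_hermite.le)
    (fun i => ?_) x
  rw [coeff_map, eq_intCast, ← Int.cast_abs, ← Int.cast_natCast]
  exact_mod_cast abs_coeff_hermite_le_factorial n i

end Polynomial

theorem Real.pow_le_pow_mul_exp_sub (k : ℕ) {y : ℝ} (hy : 0 ≤ y) :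
    y ^ k ≤ k ^ k * exp (y - k) := by
  rcases k.eq_zero_or_pos with rfl | hk
  · simpa using one_le_exp hy
  have hk : (0 : ℝ) < k := by exact_mod_cast hk
  calc y ^ k = k ^ k * (y / k) ^ k := by rw [div_pow, mul_div_cancel₀ _ (by positivity)]
    _ ≤ k ^ k * exp (y / k - 1) ^ k := by
      gcongr; linarith [add_one_le_exp (y / k - 1)]
    _ = k ^ k * exp (y - k) := by
      rw [← exp_nat_mul, mul_sub, mul_div_cancel₀ _ hk.ne', mul_one]

theorem one_add_abs_pow_sq_mul_exp_neg_sq_le (k : ℕ) (x : ℝ) :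
    ((1 + |x|) ^ k) ^ 2 * exp (-x ^ 2) ≤ exp 1 * k ^ k := by
  have hsq : (1 + |x|) ^ 2 ≤ 2 * (1 + x ^ 2) := by nlinarith [sq_abs x, sq_nonneg (1 - |x|)]
  have htwo : (2 : ℝ) ^ k ≤ exp k := by
    rw [← exp_one_pow]; gcongr; linarith [exp_one_gt_d9]
  calc ((1 + |x|) ^ k) ^ 2 * exp (-x ^ 2)
      ≤ 2 ^ k * (1 + x ^ 2) ^ k * exp (-x ^ 2) := by
        rw [← pow_mul, mul_comm k, pow_mul, ← mul_pow]; gcongr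
    _ ≤ exp k * (k ^ k * exp (1 + x ^ 2 - k)) * exp (-x ^ 2) := by
        gcongr
        exact pow_le_pow_mul_exp_sub k (by positivity)
    _ = exp 1 * k ^ k := by
        rw [mul_left_comm, mul_assoc, mul_assoc, ← exp_add, ← exp_add]
        ring_nf

theorem contDiff_Lam : ContDiff ℝ (⊤ : ℕ∞) Lam := by
  unfold Lam; fun_prop

theorem iteratedDeriv_Lam {k : ℕ} (hk : 0 < k) (x : ℝ) :
    iteratedDeriv k Lam x = 8 * ((-1) ^ k * aeval x (hermite k) * exp (-(x ^ 2 / 2))) := by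
  have hLam : Lam = fun y => -8 + 8 * exp (-(y ^ 2 / 2)) := by
    ext y; rw [Lam, neg_div]; ring
  rw [hLam, iteratedDeriv_const_add hk, iteratedDeriv_const_mul_field, iteratedDeriv_eq_iterate,
    deriv_gaussian_eq_hermite_mul_gaussian]

theorem sq_iteratedDeriv_Lam_le {k : ℕ} (hk : 0 < k) (x : ℝ) :
    iteratedDeriv k Lam x ^ 2 ≤ 64 * (k ! ^ 2 * (exp 1 * k ^ k)) := by
  have hsign : ((-1 : ℝ) ^ k) ^ 2 = 1 := by rw [← pow_mul, mul_comm, pow_mul, neg_one_sq, one_pow]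
  have hexp : exp (-(x ^ 2 / 2)) ^ 2 = exp (-x ^ 2) := by rw [← exp_nat_mul]; ring_nf
  calc iteratedDeriv k Lam x ^ 2 = 64 * (|aeval x (hermite k)| ^ 2 * exp (-x ^ 2)) := by
        rw [iteratedDeriv_Lam hk, sq_abs, ← hexp, mul_pow, mul_pow, mul_pow, hsign]; ring
    _ ≤ 64 * ((k ! * (1 + |x|) ^ k) ^ 2 * exp (-x ^ 2)) := by
        gcongr; exact abs_aeval_hermite_le k x
    _ ≤ 64 * (k ! ^ 2 * (exp 1 * k ^ k)) := by
        rw [mul_pow, mul_assoc]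
        gcongr 64 * (_ * ?_)
        exact one_add_abs_pow_sq_mul_exp_neg_sq_le k x

theorem exp_one_sq_mul_factorial_sq_mul_pow_le {k : ℕ} (hk : 1 ≤ k) :
    exp 1 ^ 2 * k ! ^ 2 * k ^ k ≤ ((3 * ((k : ℝ) + 1) / 2) ^ (3 * ((k : ℝ) + 1) / 2)) ^ 2 := by
  set a : ℝ := 3 * ((k : ℝ) + 1) / 2 with ha_def
  have hk1 : (1 : ℝ) ≤ k := by exact_mod_cast hk
  have ha : 3 ≤ a := by rw [ha_def]; linarith
  have hka : (k : ℝ) ≤ a := by rw [ha_def]; linarith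
  have hsq : (a ^ a) ^ 2 = a ^ 3 * a ^ (3 * k) := by
    rw [← rpow_natCast, ← rpow_mul (by positivity), ← pow_add, ← rpow_natCast]
    congr 1; push_cast; ring
  have he : exp 1 ^ 2 ≤ a ^ 3 := by
    calc exp 1 ^ 2 ≤ 3 ^ 2 := by gcongr; linarith [exp_one_lt_d9]
      _ ≤ a ^ 2 := by gcongr
      _ ≤ a ^ 3 := pow_le_pow_right₀ (by linarith) (by norm_num)
  have hfact : (k ! : ℝ) ^ 2 * k ^ k ≤ a ^ (3 * k) := by
    calc (k ! : ℝ) ^ 2 * k ^ k ≤ ((k : ℝ) ^ k) ^ 2 * k ^ k := by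
          gcongr; exact_mod_cast factorial_le_pow k
      _ = (k : ℝ) ^ (3 * k) := by ring
      _ ≤ a ^ (3 * k) := by gcongr
  rw [hsq, mul_assoc]
  gcongr

/-- `Λ` is `C^∞` and for every `k ≥ 1`,
`sup_x |Λ^{(k)}(x)| ≤ (8/√e)·(3(k+1)/2)^{3(k+1)/2}`. -/
theorem stmt_10 :
    ContDiff ℝ (⊤ : ℕ∞) Lam ∧
    ∀ k : ℕ, 1 ≤ k → ∀ x : ℝ,
      |iteratedDeriv k Lam x| ≤
        8 / Real.sqrt (Real.exp 1) *
          (3 * ((k : ℝ) + 1) / 2) ^ (3 * ((k : ℝ) + 1) / 2) := by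
  refine ⟨contDiff_Lam, fun k hk x => abs_le_of_sq_le_sq ?_ (by positivity)⟩
  calc iteratedDeriv k Lam x ^ 2 ≤ 64 * (k ! ^ 2 * (exp 1 * k ^ k)) := sq_iteratedDeriv_Lam_le hk x
    _ = 64 / exp 1 * (exp 1 ^ 2 * k ! ^ 2 * k ^ k) := by field_simp
    _ ≤ 64 / exp 1 * ((3 * ((k : ℝ) + 1) / 2) ^ (3 * ((k : ℝ) + 1) / 2)) ^ 2 := by
        gcongr; exact exp_one_sq_mul_factorial_sq_mul_pow_le hk
    _ = _ := by rw [mul_pow, div_pow, sq_sqrt (exp_pos 1).le]; norm_num
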